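/- For every prime p not dividing 44, the number of points (including the point at infinity) on the elliptic curve y² = x³ + x² + 3x - 1 over the field with p elements is divisible by 3. -/

import Mathlib

/-!
The point `P = (1, 2)` has order `3`: the tangent line to the curve at `P` is `y = 2x`, which
meets the cubic with multiplicity three at `x = 1`, so `2P = (1, -2) = -P`. Since `P` stays
nonsingular over every `𝔽_p` with `p ∤ 44`, the order of the finite group `E(𝔽_p)`, which is
the number of affine solutions plus one, is divisible by `3`.
-/

open WeierstrassCurve WeierstrassCurve.Affine

namespace WeierstrassCurve.Affine

lemma natCard_point_eq_natCard_equation_add_one {R : Type*} [CommRing R] [Nontrivial R] [Finite R]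
    (W : Affine R) [W.IsElliptic] :
    Nat.card W.Point = Nat.card {xy : R × R // W.Equation xy.1 xy.2} + 1 := by
  rw [Nat.card_congr W.pointEquiv]
  exact Finite.card_option

end WeierstrassCurve.Affine

def curve44A (R : Type*) [CommRing R] : WeierstrassCurve R := ⟨0, 1, 0, 3, -1⟩

section curve44A

variable {R F : Type*} [CommRing R] [Field F]

-- `Δ = -2⁸ · 11`, written so that `44 ≠ 0` visibly makes it nonzero.
lemma curve44A_Δ : (curve44A R).Δ = -(44 * 4 ^ 3) := by
  simp only [curve44A, Δ, b₂, b₄, b₆, b₈]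
  ring

lemma curve44A_equation_iff (x y : R) :
    (curve44A R).toAffine.Equation x y ↔ y ^ 2 = x ^ 3 + x ^ 2 + 3 * x - 1 := by
  rw [equation_iff]
  simp only [curve44A]
  constructor <;> intro h <;> linear_combination h

lemma curve44A_isElliptic (h44 : (44 : F) ≠ 0) : (curve44A F).IsElliptic := by
  have h4 : (4 : F) ≠ 0 := fun h4 => h44 (by linear_combination 11 * h4)
  rw [isElliptic_iff, curve44A_Δ, isUnit_iff_ne_zero]
  exact neg_ne_zero.mpr (mul_ne_zero h44 (pow_ne_zero 3 h4))

lemma curve44A_two_ne_negY_one_two (h2 : (2 : F) ≠ 0) :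
    (2 : F) ≠ (curve44A F).toAffine.negY 1 2 := by
  simp only [negY, curve44A]
  intro h
  exact h2 (mul_self_eq_zero.mp (by linear_combination h))

lemma curve44A_nonsingular_one_two (h2 : (2 : F) ≠ 0) :
    (curve44A F).toAffine.Nonsingular 1 2 :=
  (nonsingular_iff _ _).mpr
    ⟨(curve44A_equation_iff 1 2).mpr (by norm_num), Or.inr (curve44A_two_ne_negY_one_two h2)⟩

variable (h2 : (2 : F) ≠ 0)

def curve44A_pointOneTwo : (curve44A F).toAffine.Point :=
  .some 1 2 (curve44A_nonsingular_one_two h2)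

variable [DecidableEq F]

lemma curve44A_pointOneTwo_add_self :
    curve44A_pointOneTwo h2 + curve44A_pointOneTwo h2 = -curve44A_pointOneTwo h2 := by
  have hy := curve44A_two_ne_negY_one_two h2
  have hslope : (curve44A F).toAffine.slope 1 1 2 2 = 2 := by
    rw [slope_of_Y_ne rfl hy, div_eq_iff (sub_ne_zero.mpr hy)]
    simp only [negY, curve44A]
    ring
  rw [curve44A_pointOneTwo, Point.add_self_of_Y_ne hy, Point.neg_some, Point.some.injEq, addY,
    negAddY, hslope]
  simp only [addX, negY, curve44A]
  constructor <;> ring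

lemma curve44A_addOrderOf_pointOneTwo : addOrderOf (curve44A_pointOneTwo h2) = 3 := by
  refine addOrderOf_eq_prime ?_ (Point.some_ne_zero _)
  rw [succ_nsmul, two_nsmul, curve44A_pointOneTwo_add_self, neg_add_cancel]

end curve44A

theorem stmt_8 (p : ℕ) (hp : p.Prime) (h : ¬ (p ∣ 44)) :
    3 ∣ Nat.card {P : ZMod p × ZMod p //
      P.2 ^ 2 = P.1 ^ 3 + P.1 ^ 2 + 3 * P.1 - 1} + 1 := by
  have : Fact p.Prime := ⟨hp⟩
  have h44 : (44 : ZMod p) ≠ 0 := by exact_mod_cast (ZMod.natCast_eq_zero_iff 44 p).not.mpr h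
  have h2 : (2 : ZMod p) ≠ 0 := fun h2 => h44 (by linear_combination 22 * h2)
  have := curve44A_isElliptic h44
  have hcard := (curve44A (ZMod p)).toAffine.natCard_point_eq_natCard_equation_add_one
  simp only [curve44A_equation_iff] at hcard
  rw [← hcard, ← curve44A_addOrderOf_pointOneTwo h2]
  exact addOrderOf_dvd_natCard _
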